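/- Let Γ be a diagram, k a vertex of Γ, and suppose that in Γ no edge incident to k points toward k with odd weight — equivalently, every vertex adjacent to k via an odd-weight edge has that edge directed away from k. Then the underlying mod-2 graphs of Γ and μ_k(Γ) coincide (where the mod-2 graph joins i and j iff they are joined in the diagram by an edge of odd weight). -/

import Mathlib

open Finset

/-! A diagram on a vertex type `V` is encoded by a weight function `w : V → V → ℕ`:
`w i j` is the weight of the directed edge from `i` to `j` (`0` if there is no such
edge).  A genuine diagram is loopless and has at most one direction between any two
vertices, and the product of the weights along any cycle is a perfect square. -/

/-- No loops. -/
def DiagLoopless {V : Type*} (w : V → V → ℕ) : Prop := ∀ i, w i i = 0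

/-- Between any two vertices there is at most one directed edge. -/
def DiagOneDir {V : Type*} (w : V → V → ℕ) : Prop := ∀ i j, w i j = 0 ∨ w j i = 0

/-- The (undirected) weight of the edge between `i` and `j`. -/
def uw {V : Type*} (w : V → V → ℕ) (i j : V) : ℕ := w i j + w j i

/-- The product of the edge weights along any cycle (of length `≥ 3`) is a perfect
square. -/
def CycleSquare {V : Type*} (w : V → V → ℕ) : Prop :=
  ∀ (m : ℕ) (v : Fin (m + 3) → V), Function.Injective v →
    (∀ t, uw w (v t) (v (t + 1)) ≠ 0) →
    ∃ s : ℕ, (∏ t : Fin (m + 3), uw w (v t) (v (t + 1))) = s ^ 2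

/-- Fomin–Zelevinsky diagram mutation at the vertex `k`.  Edges incident to `k` are
reversed with their weights unchanged, and for every oriented two-edge path `i → k → j`
with weights `a`, `b`, the weight `c` of the edge between `i` and `j` is replaced by the
weight `c'` determined by `±√c ± √c' = √(ab)`, the sign before `√c` (resp. `√c'`) being
`+` exactly when `i,j,k` form an oriented cycle in `Γ` (resp. in `μ_k(Γ)`). -/
def mutate {V : Type*} [DecidableEq V] (w : V → V → ℕ) (k : V) : V → V → ℕ :=
  fun i j =>
    if i = j then 0
    else if j = k then w k i
    else if i = k then w j k
    else if w i k ≠ 0 ∧ w k j ≠ 0 then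
      -- oriented two-edge path `i → k → j`
      let a := w i k; let b := w k j; let c := w i j + w j i
      let s := Nat.sqrt (a * b * c)
      if w j i ≠ 0 then
        -- the triangle `i → k → j → i` is oriented in `Γ`: `c' = ab + c − 2√(abc)`,
        -- and the new edge goes from `i` to `j` exactly when `ab ≥ c`
        (if c ≤ a * b then a * b + c - 2 * s else 0)
      else
        -- non-oriented (or no) triangle: `c' = ab + c + 2√(abc)`, new edge `i → j`
        a * b + c + 2 * s
    else if w j k ≠ 0 ∧ w k i ≠ 0 then
      -- oriented two-edge path `j → k → i`: the new edge goes from `j` to `i`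
      -- unless the triangle was oriented in `Γ` with `ab < c`
      let a := w j k; let b := w k i; let c := w i j + w j i
      let s := Nat.sqrt (a * b * c)
      if w i j ≠ 0 ∧ a * b < c then a * b + c - 2 * s else 0
    else w i j

/-- Mutation equivalence of diagrams. -/
def MutEquiv {V : Type*} [DecidableEq V] (w w' : V → V → ℕ) : Prop :=
  Relation.ReflTransGen (fun x y => ∃ k, y = mutate x k) w w'

/-- A diagram is 2-finite if every mutation-equivalent diagram has all edge weights in
`{1,2,3}`. -/
def TwoFinite {V : Type*} [DecidableEq V] (w : V → V → ℕ) : Prop :=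
  ∀ w', MutEquiv w w' → ∀ i j, w' i j ≤ 3

/-- The subdiagram induced on a subset `S` of the vertices. -/
def restrictDiag {V : Type*} (w : V → V → ℕ) (S : Set V) : S → S → ℕ :=
  fun i j => w i j

/-- A diagram is minimal 2-infinite if it is 2-infinite and every proper induced
subdiagram is 2-finite. -/
def MinimalTwoInfinite {V : Type*} [DecidableEq V] (w : V → V → ℕ) : Prop :=
  ¬ TwoFinite w ∧ ∀ S : Set V, S ≠ Set.univ → TwoFinite (restrictDiag w S)

/-- The underlying undirected graph of a diagram. -/
def toGraph {V : Type*} (w : V → V → ℕ) : SimpleGraph V where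
  Adj i j := i ≠ j ∧ uw w i j ≠ 0
  symm := by
    constructor
    intro i j h
    refine ⟨h.1.symm, ?_⟩
    have h2 := h.2
    unfold uw at h2 ⊢
    omega
  loopless := by constructor; intro i h; exact h.1 rfl

/-- The mod-2 underlying graph of a diagram: `i ∼ j` iff the edge between them has odd
weight. -/
def toGraphMod2 {V : Type*} (w : V → V → ℕ) : SimpleGraph V where
  Adj i j := i ≠ j ∧ Odd (uw w i j)
  symm := by
    constructor
    intro i j h
    refine ⟨h.1.symm, ?_⟩
    have h2 := h.2
    unfold uw at h2 ⊢
    rwa [Nat.add_comm]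
  loopless := by constructor; intro i h; exact h.1 rfl

/-- The basic move `φ_{c,a}` on an undirected graph: the adjacency between `c` and each
neighbour `v ≠ c` of `a` is toggled, and all other edges are unchanged. -/
def basicMove {V : Type*} (G : SimpleGraph V) (c a : V) : SimpleGraph V where
  Adj u v := Xor' (G.Adj u v)
      ((u = c ∧ v ≠ c ∧ G.Adj a v) ∨ (v = c ∧ u ≠ c ∧ G.Adj a u))
  symm := by
    constructor
    intro u v h
    show Xor' (G.Adj v u) _
    rw [G.adj_comm v u]
    unfold Xor' Xor at h ⊢
    tauto
  loopless := by
    constructor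
    intro u h
    unfold Xor' Xor at h
    rcases h with ⟨h1, _⟩ | ⟨h1, _⟩
    · exact G.irrefl h1
    · rcases h1 with ⟨h2, h3, _⟩ | ⟨h2, h3, _⟩ <;> exact h3 h2

/-- One basic move applied to `G` (at a pair of adjacent vertices). -/
def BMStep {V : Type*} (G G' : SimpleGraph V) : Prop :=
  ∃ c a, G.Adj c a ∧ G' = basicMove G c a

/-- BM-equivalence: two graphs are related by a sequence of basic moves. -/
def BMEquiv {V : Type*} (G G' : SimpleGraph V) : Prop :=
  Relation.ReflTransGen BMStep G G'

/-- The path (type `A_n`) graph on `n` vertices. -/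
def dynA (n : ℕ) : SimpleGraph (Fin n) :=
  SimpleGraph.fromRel (fun i j => (i : ℕ) + 1 = (j : ℕ))

/-- The type `D_n` tree (`n ≥ 4`): a path `1 – 2 – ⋯ – (n−1)` with `0` attached to `2`. -/
def dynD (n : ℕ) : SimpleGraph (Fin n) :=
  SimpleGraph.fromRel (fun i j =>
    ((i : ℕ) = 0 ∧ (j : ℕ) = 2) ∨ ((i : ℕ) + 1 = (j : ℕ) ∧ 1 ≤ (i : ℕ)))

/-- The type `E_n` tree (`n ∈ {6,7,8}`): a path `0 – 1 – ⋯ – (n−2)` with `n−1` attached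
to `2`. -/
def dynE (n : ℕ) : SimpleGraph (Fin n) :=
  SimpleGraph.fromRel (fun i j =>
    ((i : ℕ) + 1 = (j : ℕ) ∧ (j : ℕ) ≤ n - 2) ∨ ((i : ℕ) = 2 ∧ (j : ℕ) = n - 1))

/-- `G` is (isomorphic to) a simply-laced Dynkin graph: type `A`, `D` or `E`. -/
def IsDynkinADE {V : Type*} (G : SimpleGraph V) : Prop :=
  (∃ n, 1 ≤ n ∧ Nonempty (G ≃g dynA n)) ∨
  (∃ n, 4 ≤ n ∧ Nonempty (G ≃g dynD n)) ∨
  (∃ n, (n = 6 ∨ n = 7 ∨ n = 8) ∧ Nonempty (G ≃g dynE n))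

/-- `v` enumerates an induced cycle (of length `m + 3`) in the diagram `w`. -/
def InducedCycleOn {V : Type*} (w : V → V → ℕ) {m : ℕ} (v : Fin (m + 3) → V) : Prop :=
  Function.Injective v ∧
    ∀ s t : Fin (m + 3), s ≠ t → (uw w (v s) (v t) ≠ 0 ↔ (t = s + 1 ∨ s = t + 1))

/-- The diagram contains a non-oriented (induced) cycle as a subdiagram. -/
def HasNonorientedCycle {V : Type*} (w : V → V → ℕ) : Prop :=
  ∃ (m : ℕ) (v : Fin (m + 3) → V), InducedCycleOn w v ∧
    ¬ ((∀ t, w (v t) (v (t + 1)) ≠ 0) ∨ (∀ t, w (v (t + 1)) (v t) ≠ 0))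

theorem Nat.two_mul_sqrt_mul_le_add (x y : ℕ) : 2 * Nat.sqrt (x * y) ≤ x + y := by
  have hsq := Nat.sqrt_le' (x * y)
  by_contra! hlt
  zify at hsq hlt
  nlinarith [sq_nonneg ((x : ℤ) - y)]

theorem uw_comm {V : Type*} (w : V → V → ℕ) (i j : V) : uw w i j = uw w j i :=
  Nat.add_comm _ _

section Mutation

variable {V : Type*} [DecidableEq V] (w : V → V → ℕ) (k : V)

theorem uw_mutate_of_ne_right {i : V} (hik : i ≠ k) : uw (mutate w k) i k = uw w i k := by
  simp only [uw, mutate, if_neg hik, if_neg hik.symm, if_true]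
  exact Nat.add_comm _ _

/-- Through an oriented path `i → k → j` with weights `a`, `b`, the new weight is
`ab + c ± 2√(abc)`, whichever direction the new edge takes. -/
theorem uw_mutate_modEq_of_path (hdir : DiagOneDir w) {i j : V} (hij : i ≠ j)
    (hik : i ≠ k) (hjk : j ≠ k) (hpath : w i k ≠ 0 ∧ w k j ≠ 0) :
    uw (mutate w k) i j ≡ uw w i j + w i k * w k j [MOD 2] := by
  have hki : w k i = 0 := (hdir i k).resolve_left hpath.1
  have hno_back : ¬ (w j k ≠ 0 ∧ w k i ≠ 0) := fun h => h.2 hki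
  have hsqrt := Nat.two_mul_sqrt_mul_le_add (w i k * w k j) (w i j + w j i)
  simp only [uw, Nat.ModEq, mutate, if_neg hij, if_neg hij.symm, if_neg hik, if_neg hjk,
    if_pos hpath, if_neg hno_back, Nat.add_comm (w j i) (w i j)]
  generalize Nat.sqrt (w i k * w k j * (w i j + w j i)) = s at *
  generalize w i k * w k j = p at *
  split_ifs <;> omega

theorem uw_mutate_modEq (hdir : DiagOneDir w) {i j : V} (hij : i ≠ j) (hik : i ≠ k)
    (hjk : j ≠ k) :
    uw (mutate w k) i j ≡ uw w i j + w i k * w k j + w j k * w k i [MOD 2] := by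
  by_cases hpath : w i k ≠ 0 ∧ w k j ≠ 0
  · have hki : w k i = 0 := (hdir i k).resolve_left hpath.1
    simpa [hki] using uw_mutate_modEq_of_path w k hdir hij hik hjk hpath
  by_cases hback : w j k ≠ 0 ∧ w k i ≠ 0
  · have hkj : w k j = 0 := (hdir j k).resolve_left hback.1
    have h := uw_mutate_modEq_of_path w k hdir hij.symm hjk hik hback
    rw [uw_comm, uw_comm w j] at h
    simpa [hkj] using h
  have hpath0 : w i k * w k j = 0 := by
    rw [not_and_or, not_not, not_not] at hpath
    exact mul_eq_zero.mpr hpath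
  have hback0 : w j k * w k i = 0 := by
    rw [not_and_or, not_not, not_not] at hback
    exact mul_eq_zero.mpr hback
  simp only [hpath0, hback0, add_zero]
  simp only [uw, mutate, if_neg hij, if_neg hij.symm, if_neg hik, if_neg hjk, if_neg hpath,
    if_neg hback]
  rw [Nat.add_comm]

theorem odd_uw_mutate_iff (hdir : DiagOneDir w) (hk : ∀ c, ¬ Odd (w c k)) (i j : V) :
    Odd (uw (mutate w k) i j) ↔ Odd (uw w i j) := by
  rcases eq_or_ne i j with rfl | hij
  · simp [uw, mutate]
  rcases eq_or_ne j k with rfl | hjk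
  · rw [uw_mutate_of_ne_right w j hij]
  rcases eq_or_ne i k with rfl | hik
  · rw [uw_comm, uw_mutate_of_ne_right w i hjk, uw_comm]
  have hmod := uw_mutate_modEq w k hdir hij hik hjk
  have hi : Even (w i k * w k j) := (Nat.not_odd_iff_even.mp (hk i)).mul_right _
  have hj : Even (w j k * w k i) := (Nat.not_odd_iff_even.mp (hk j)).mul_right _
  rw [Nat.odd_iff, Nat.odd_iff, hmod, Nat.add_mod, Nat.add_mod (uw w i j),
    Nat.even_iff.mp hi, Nat.even_iff.mp hj]
  simp

end Mutation

theorem stmt19_general {V : Type*} [DecidableEq V] (w : V → V → ℕ) (k : V)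
    (hdir : DiagOneDir w)
    (hk : ∀ c, ¬ Odd (w c k)) :
    toGraphMod2 (mutate w k) = toGraphMod2 w := by
  ext i j
  exact and_congr_right fun _ => odd_uw_mutate_iff w k hdir hk i j

/-- If no edge incident to `k` points toward `k` with odd weight, then the mod-2
underlying graphs of `Γ` and of `μ_k(Γ)` coincide. -/
theorem stmt19 {V : Type*} [DecidableEq V] (w : V → V → ℕ) (k : V)
    (hloop : DiagLoopless w) (hdir : DiagOneDir w) (hsq : CycleSquare w)
    (hk : ∀ c, ¬ Odd (w c k)) :
    toGraphMod2 (mutate w k) = toGraphMod2 w :=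
  stmt19_general w k hdir hk
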